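/- Let A be a left brace and let I be an ideal of A. Then I*A, the additive subgroup generated by all elements a*b with a ∈ I and b ∈ A, is an ideal of A. In particular, each term A^{(n)} of the right series is an ideal of A. -/
import Mathlib


class LeftBrace (A : Type*) extends AddCommGroup A where
  circ : A → A → A
  circ_assoc : ∀ a b c : A, circ (circ a b) c = circ a (circ b c)
  circ_zero : ∀ a : A, circ a 0 = a
  zero_circ : ∀ a : A, circ 0 a = a
  inv : A → A
  circ_inv : ∀ a : A, circ a (inv a) = 0
  inv_circ : ∀ a : A, circ (inv a) a = 0
  circ_add : ∀ a b c : A, circ a (b + c) + a = circ a b + circ a c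

namespace LeftBrace

variable {A : Type*} [LeftBrace A]

def star (a b : A) : A := circ a b - a - b

def subStarSet (S T : Set A) : AddSubgroup A :=
  AddSubgroup.closure {x | ∃ a ∈ S, ∃ b ∈ T, x = star a b}

def subStar (S T : AddSubgroup A) : AddSubgroup A := subStarSet (S : Set A) (T : Set A)

/-- `leftPow A m` is `A^{m+1}` of the left chain `A^1 = A`, `A^{i+1} = A * A^i`. -/
def leftPow (A : Type*) [LeftBrace A] : ℕ → AddSubgroup A
  | 0 => ⊤
  | m + 1 => subStar ⊤ (leftPow A m)

def leftIdx (A : Type*) [LeftBrace A] (m : ℕ) : AddSubgroup A := leftPow A (m - 1)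

/-- `rightPow A m` is `A^{(m+1)}` of the right chain `A^{(1)} = A`, `A^{(i+1)} = A^{(i)} * A`. -/
def rightPow (A : Type*) [LeftBrace A] : ℕ → AddSubgroup A
  | 0 => ⊤
  | m + 1 => subStar (rightPow A m) ⊤

def rightIdx (A : Type*) [LeftBrace A] (m : ℕ) : AddSubgroup A := rightPow A (m - 1)

def strongPow (A : Type*) [LeftBrace A] : ℕ → AddSubgroup A
  | 0 => ⊤
  | m + 1 => ⨆ j : Fin (m + 1), subStar (strongPow A j) (strongPow A (m - j))
  termination_by m => m
  decreasing_by
  · exact j.isLt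
  · exact Nat.lt_succ_of_le (Nat.sub_le m j)

def strongIdx (A : Type*) [LeftBrace A] (m : ℕ) : AddSubgroup A := strongPow A (m - 1)

/-- An ideal of a left brace, as a subset: closed under the additive group
operations, absorbing under `*` on both sides, and normal in `(A, ∘)`. -/
def IsIdeal (I : Set A) : Prop :=
  (0 : A) ∈ I ∧ (∀ x ∈ I, ∀ y ∈ I, x + y ∈ I) ∧ (∀ x ∈ I, -x ∈ I) ∧
  (∀ a : A, ∀ i ∈ I, star a i ∈ I) ∧ (∀ a : A, ∀ i ∈ I, star i a ∈ I) ∧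
  (∀ a : A, ∀ i ∈ I, circ (circ a i) (inv a) ∈ I)

/-- `circPow a m` is the product of `m` copies of `a` in the group `(A, ∘)`. -/
def circPow (a : A) : ℕ → A
  | 0 => 0
  | m + 1 => circ a (circPow a m)

/-- Membership in the subgroup of `(A, ∘)` generated by a subset. -/
inductive circClosure (S : Set A) : A → Prop
  | of : ∀ x ∈ S, circClosure S x
  | zero : circClosure S 0
  | mul : ∀ x y : A, circClosure S x → circClosure S y → circClosure S (circ x y)
  | inv : ∀ x : A, circClosure S x → circClosure S (inv x)

end LeftBrace

namespace LeftBrace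

variable {A : Type*} [LeftBrace A]

/-- The lambda map `b ↦ a ∘ b - a`, as an additive homomorphism. -/
def lamHom (a : A) : A →+ A where
  toFun b := circ a b - a
  map_zero' := by simp [circ_zero]
  map_add' b c := by
    have h := circ_add a b c
    have hX : circ a (b + c) = circ a b + circ a c - a := by rw [← h]; abel
    simp only [hX]; abel

lemma star_eq_lam (a b : A) : star a b = lamHom a b - b := rfl

lemma star_zero' (a : A) : star a (0 : A) = 0 := by
  simp [star_eq_lam]

lemma star_add' (a b c : A) : star a (b + c) = star a b + star a c := by
  simp only [star_eq_lam, map_add]; abel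

lemma star_neg' (a b : A) : star a (-b) = -star a b := by
  simp only [star_eq_lam, map_neg]; abel

lemma lam_circ (a i b : A) : lamHom (circ a i) b = lamHom a (lamHom i b) := by
  show circ (circ a i) b - circ a i = lamHom a (circ i b - i)
  rw [map_sub]
  show _ = (circ a (circ i b) - a) - (circ a i - a)
  rw [circ_assoc]; abel

lemma circ_conj (a i : A) : circ (circ (circ a i) (inv a)) a = circ a i := by
  rw [circ_assoc, inv_circ, circ_zero]

lemma star_star (a i b : A) :
    star a (star i b)
      = star (circ (circ a i) (inv a)) (lamHom a b) - star i b := by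
  have h2 : lamHom a (lamHom i b) = lamHom (circ (circ a i) (inv a)) (lamHom a b) := by
    rw [← lam_circ, ← lam_circ, circ_conj]
  simp only [star_eq_lam, map_sub, h2]

lemma conj_eq (a i : A) :
    circ (circ a i) (inv a) = lamHom a i - star (circ (circ a i) (inv a)) a := by
  have h : circ (circ (circ a i) (inv a)) a = circ a i := circ_conj a i
  show _ = (circ a i - a) - (circ (circ (circ a i) (inv a)) a - circ (circ a i) (inv a) - a)
  rw [h]; abel

lemma isIdeal_univ : IsIdeal (Set.univ : Set A) := by
  refine ⟨trivial, ?_, ?_, ?_, ?_, ?_⟩ <;> intros <;> trivial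

theorem main_aux (I : Set A) (hI : IsIdeal I) :
    IsIdeal ((subStarSet I (Set.univ : Set A) : AddSubgroup A) : Set A) := by
  obtain ⟨h0, hadd, hneg, hleft, hright, hnorm⟩ := hI
  set J : AddSubgroup A := subStarSet I (Set.univ : Set A) with hJ
  -- generators
  have hgen : ∀ i ∈ I, ∀ b : A, star i b ∈ J := fun i hi b =>
    AddSubgroup.subset_closure ⟨i, hi, b, Set.mem_univ b, rfl⟩
  -- J ⊆ I
  have hsubI : ∀ x ∈ J, x ∈ I := by
    intro x hx
    refine AddSubgroup.closure_induction ?_ h0 (fun u v _ _ hu hv => hadd u hu v hv)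
      (fun u _ hu => hneg u hu) hx
    rintro y ⟨i, hi, b, -, rfl⟩
    exact hright b i hi
  -- A * J ⊆ J
  have hAJ : ∀ a : A, ∀ x ∈ J, star a x ∈ J := by
    intro a x hx
    refine AddSubgroup.closure_induction ?_ ?_ ?_ ?_ hx
    · rintro y ⟨i, hi, b, -, rfl⟩
      rw [star_star a i b]
      exact J.sub_mem (hgen _ (hnorm a i hi) _) (hgen i hi b)
    · rw [star_zero']; exact J.zero_mem
    · intro u v _ _ hu hv; rw [star_add']; exact J.add_mem hu hv
    · intro u _ hu; rw [star_neg']; exact J.neg_mem hu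
  refine ⟨J.zero_mem, fun x hx y hy => J.add_mem hx hy, fun x hx => J.neg_mem hx,
    hAJ, fun a i hi => hgen i (hsubI i hi) a, ?_⟩
  intro a i hi
  rw [conj_eq a i]
  have hy : circ (circ a i) (inv a) ∈ I := hnorm a i (hsubI i hi)
  have h1 : lamHom a i ∈ J := by
    have := J.add_mem (hAJ a i hi) hi
    rwa [star_eq_lam, sub_add_cancel] at this
  exact J.sub_mem h1 (hgen _ hy a)

theorem rightPow_isIdeal (m : ℕ) : IsIdeal ((rightPow A m : AddSubgroup A) : Set A) := by
  induction m with
  | zero => simpa [rightPow] using (isIdeal_univ (A := A))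
  | succ m ih =>
      have := main_aux (A := A) _ ih
      simpa [rightPow, subStar, AddSubgroup.coe_top] using this

end LeftBrace

open LeftBrace in
/-- if `I` is an ideal of a left brace `A`, then `I*A` is an ideal of
`A`; in particular each term `A^{(n)}` of the right series is an ideal of `A`. -/
theorem ideal_star_top_isIdeal (A : Type*) [LeftBrace A] (I : Set A) (hI : IsIdeal I) :
    IsIdeal ((subStarSet I (Set.univ : Set A) : AddSubgroup A) : Set A) ∧
    ∀ n : ℕ, IsIdeal ((rightIdx A n : AddSubgroup A) : Set A) := by
  exact ⟨LeftBrace.main_aux I hI, fun n => LeftBrace.rightPow_isIdeal (n - 1)⟩
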